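/- arXiv:2412.01174 — 2 statements merged into one kernel-verified Lean document; each statement's English description precedes it below -/
import Mathlib

section
/- Let (Ω, 𝔽, μ) be a probability space, let X₀, X₁ : Ω → ℝ^d be integrable random vectors, and for t ∈ [0,1] let X_t := (1−t)·X₀ + t·X₁ be the linear interpolation process. Let v : [0,1] × ℝ^d → ℝ^d be a measurable velocity field such that for every t ∈ [0,1] the function ω ↦ v(t, X_t(ω)) is a version of the conditional expectation E[X₁ − X₀ | σ(X_t)] (the rectified-flow velocity field). Let Z : Ω → (ℝ → ℝ^d) be a process such that for μ-a.e. ω the path t ↦ Z(ω)(t) is differentiable on [0,1] with derivative v(t, Z(ω)(t)) (i.e., Z solves the ODE dZ_t = v(t, Z_t) dt), and assume that for every t ∈ [0,1] the law of ω ↦ Z(ω)(t) under μ equals the law of X_t under μ. Then for every convex function c : ℝ^d → ℝ such that c(X₁ − X₀) is integrable and c(v(t, X_t)) is integrable for each t with t ↦ E[c(v(t, X_t))] integrable on [0,1], the rectified coupling does not increase the transport cost: ∫ c(Z(ω)(1) − Z(ω)(0)) dμ(ω) ≤ ∫ c(X₁(ω) − X₀(ω)) dμ(ω). -/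
/-!
Along a trajectory, `Z 1 - Z 0 = ∫₀¹ v t (Z t) dt`, so Jensen's inequality gives
`c (Z 1 - Z 0) ≤ ∫₀¹ c (v t (Z t)) dt`. After taking expectations and exchanging the integrals,
the marginal condition replaces `Z t` by `X t`, and conditional Jensen bounds
`E c (v t (X t)) = E c (E[X₁ - X₀ | X t])` by `E c (X₁ - X₀)`.

For a nonnegative cost this is carried out with lower Lebesgue integrals, where Tonelli needs no
integrability; the same estimate for the norm gives the integrability of the velocity along almost
every path that the fundamental theorem of calculus needs. A general convex cost is reduced to a
nonnegative one by subtracting an affine minorant, whose expectation is the same for both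
couplings since they share the marginals at times `0` and `1`.
-/

open MeasureTheory ProbabilityTheory Set

theorem ConvexOn.exists_continuousLinearMap_add_const_le {E : Type*} [TopologicalSpace E]
    [AddCommGroup E] [Module ℝ E] [IsTopologicalAddGroup E] [ContinuousSMul ℝ E]
    [LocallyConvexSpace ℝ E] {φ : E → ℝ} (hφ : ConvexOn ℝ univ φ) (hφc : LowerSemicontinuous φ) :
    ∃ (l : E →L[ℝ] ℝ) (b : ℝ), ∀ x, l x + b ≤ φ x := by
  obtain ⟨l, b, hle, -⟩ := hφ.exists_affine_le_of_lt (𝕜 := ℝ) (mem_univ 0)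
    (sub_one_lt (φ 0)) isClosed_univ (lowerSemicontinuousOn_univ_iff.2 hφc)
  exact ⟨l, b, fun x => hle ⟨x, mem_univ x⟩⟩

section Jensen

variable {α E : Type*} [NormedAddCommGroup E] [NormedSpace ℝ E] {φ : E → ℝ}

theorem ConvexOn.ofReal_map_integral_le_lintegral [CompleteSpace E] [MeasurableSpace α]
    {μ : Measure α} [IsProbabilityMeasure μ] (hφ : ConvexOn ℝ univ φ) (hφc : Continuous φ)
    (hφ0 : ∀ x, 0 ≤ φ x) {f : α → E} (hf : Integrable f μ) :
    ENNReal.ofReal (φ (∫ a, f a ∂μ)) ≤ ∫⁻ a, ENNReal.ofReal (φ (f a)) ∂μ := by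
  have hφf_nonneg : 0 ≤ᵐ[μ] fun a => φ (f a) := ae_of_all _ fun a => hφ0 (f a)
  by_cases hφf : Integrable (fun a => φ (f a)) μ
  · rw [← ofReal_integral_eq_lintegral_ofReal hφf hφf_nonneg]
    exact ENNReal.ofReal_le_ofReal <| hφ.map_integral_le hφc.continuousOn isClosed_univ
      (ae_of_all _ fun a => mem_univ _) hf hφf
  · have hinf : ¬ HasFiniteIntegral (fun a => φ (f a)) μ := fun h =>
      hφf ⟨hφc.comp_aestronglyMeasurable hf.aestronglyMeasurable, h⟩
    rw [hasFiniteIntegral_iff_ofReal hφf_nonneg, not_lt, top_le_iff] at hinf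
    exact hinf ▸ le_top

theorem ConvexOn.lintegral_ofReal_map_condExp_le [FiniteDimensional ℝ E] (hφ : ConvexOn ℝ univ φ)
    {m m₀ : MeasurableSpace α} {μ : Measure α} (hm : m ≤ m₀) [SigmaFinite (μ.trim hm)]
    (hφ0 : ∀ x, 0 ≤ φ x) {Y : α → E} (hY : Integrable Y μ) (hφY : Integrable (φ ∘ Y) μ) :
    ∫⁻ a, ENNReal.ofReal (φ (μ[Y | m] a)) ∂μ ≤ ∫⁻ a, ENNReal.ofReal (φ (Y a)) ∂μ := by
  have hcondExp_nonneg : 0 ≤ᵐ[μ] μ[φ ∘ Y | m] := condExp_nonneg (ae_of_all _ fun a => hφ0 (Y a))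
  calc ∫⁻ a, ENNReal.ofReal (φ (μ[Y | m] a)) ∂μ
      ≤ ∫⁻ a, ENNReal.ofReal (μ[φ ∘ Y | m] a) ∂μ :=
        lintegral_mono_ae <| (hφ.map_condExp_le_of_finiteDimensional hm hY hφY).mono
          fun a ha => ENNReal.ofReal_le_ofReal ha
    _ = ENNReal.ofReal (∫ a, (φ ∘ Y) a ∂μ) := by
        rw [← ofReal_integral_eq_lintegral_ofReal integrable_condExp hcondExp_nonneg,
          integral_condExp hm]
    _ = ∫⁻ a, ENNReal.ofReal (φ (Y a)) ∂μ :=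
        ofReal_integral_eq_lintegral_ofReal hφY (ae_of_all _ fun a => hφ0 (Y a))

end Jensen

theorem integral_Icc_eq_sub_of_hasDerivWithinAt {E : Type*} [NormedAddCommGroup E]
    [NormedSpace ℝ E] [CompleteSpace E] {f f' : ℝ → E} {a b : ℝ} (hab : a ≤ b)
    (hf : ∀ t ∈ Icc a b, HasDerivWithinAt f (f' t) (Icc a b) t)
    (hf' : IntegrableOn f' (Icc a b)) :
    ∫ t in Icc a b, f' t = f b - f a := by
  rw [integral_Icc_eq_integral_Ioc, ← intervalIntegral.integral_of_le hab]
  exact intervalIntegral.integral_eq_sub_of_hasDeriv_right_of_le hab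
    (fun t ht => (hf t ht).continuousWithinAt)
    (fun t ht => (hf t (Ioo_subset_Icc_self ht)).mono_of_mem_nhdsWithin
      (Icc_mem_nhdsGT_of_mem ⟨ht.1.le, ht.2⟩))
    ((intervalIntegrable_iff_integrableOn_Icc_of_le hab).2 hf')

theorem ConvexOn.ofReal_map_sub_le_setLIntegral_Icc {E : Type*} [NormedAddCommGroup E]
    [NormedSpace ℝ E] [CompleteSpace E] {φ : E → ℝ} (hφ : ConvexOn ℝ univ φ)
    (hφc : Continuous φ) (hφ0 : ∀ x, 0 ≤ φ x) {f f' : ℝ → E}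
    (hf : ∀ t ∈ Icc (0 : ℝ) 1, HasDerivWithinAt f (f' t) (Icc 0 1) t)
    (hf' : IntegrableOn f' (Icc 0 1)) :
    ENNReal.ofReal (φ (f 1 - f 0)) ≤ ∫⁻ t in Icc 0 1, ENNReal.ofReal (φ (f' t)) := by
  have : IsProbabilityMeasure (volume.restrict (Icc (0 : ℝ) 1)) := ⟨by simp⟩
  rw [← integral_Icc_eq_sub_of_hasDerivWithinAt zero_le_one hf hf']
  exact hφ.ofReal_map_integral_le_lintegral hφc hφ0 hf'

theorem exists_measurable_uncurry_ae_eq_of_continuous {Ω ι β : Type*} [MeasurableSpace Ω]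
    [TopologicalSpace ι] [TopologicalSpace.MetrizableSpace ι] [SecondCountableTopology ι]
    [MeasurableSpace ι] [OpensMeasurableSpace ι] [TopologicalSpace β]
    [TopologicalSpace.PseudoMetrizableSpace β] [MeasurableSpace β] [BorelSpace β] [Zero β]
    {μ : Measure Ω} {Z : Ω → ι → β} (hcont : ∀ᵐ ω ∂μ, Continuous (Z ω))
    (hmeas : ∀ t, AEMeasurable (fun ω => Z ω t) μ) :
    ∃ W : Ω → ι → β, Measurable (Function.uncurry W) ∧ ∀ᵐ ω ∂μ, W ω = Z ω := by
  obtain ⟨D, hDc, hDd⟩ := TopologicalSpace.exists_countable_dense ι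
  set g : ι → Ω → β := fun t => (hmeas t).mk _
  set P : Ω → Prop := fun ω => Continuous (Z ω) ∧ ∀ q ∈ D, Z ω q = g q ω
  set G : Set Ω := (toMeasurable μ {ω | ¬ P ω})ᶜ
  have hGm : MeasurableSet G := (measurableSet_toMeasurable _ _).compl
  have hGP : ∀ ω ∈ G, P ω := fun ω hω => by_contra fun h => hω (subset_toMeasurable _ _ h)
  have hG : ∀ᵐ ω ∂μ, ω ∈ G := by
    have hP : ∀ᵐ ω ∂μ, P ω :=
      hcont.and ((ae_ball_iff hDc).2 fun q _ => (hmeas q).ae_eq_mk)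
    rw [ae_iff] at hP ⊢
    simpa [G] using hP
  refine ⟨fun ω => G.indicator Z ω, ?_, hG.mono fun ω hω => indicator_of_mem hω Z⟩
  -- at a fixed time `t`, a pointwise limit of measurable versions at times of `D` tending to `t`
  have hmeas_t : ∀ t, Measurable fun ω => G.indicator Z ω t := by
    intro t
    obtain ⟨u, huD, hu⟩ := mem_closure_iff_seq_limit.1 (hDd.closure_eq ▸ mem_univ t)
    refine measurable_of_tendsto_metrizable
      (fun n => ((hmeas (u n)).measurable_mk).indicator hGm) (tendsto_pi_nhds.2 fun ω => ?_)
    by_cases hω : ω ∈ G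
    · simp only [indicator_of_mem hω]
      refine (((hGP ω hω).1.tendsto t).comp hu).congr fun n => ?_
      exact (hGP ω hω).2 (u n) (huD n)
    · simp only [indicator_of_notMem hω, Pi.zero_apply]
      exact tendsto_const_nhds
  have hcont_t : ∀ ω, Continuous fun t => G.indicator Z ω t := by
    intro ω
    by_cases hω : ω ∈ G
    · simpa only [indicator_of_mem hω] using (hGP ω hω).1
    · simpa only [indicator_of_notMem hω, Pi.zero_apply] using continuous_const
  exact (measurable_uncurry_of_continuous_of_measurable hcont_t hmeas_t).comp measurable_swap

theorem aemeasurable_uncurry_of_continuousOn_Icc {Ω β : Type*} [MeasurableSpace Ω]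
    [TopologicalSpace β] [TopologicalSpace.PseudoMetrizableSpace β] [MeasurableSpace β]
    [BorelSpace β] [Zero β] {μ : Measure Ω} {a b : ℝ} (hab : a ≤ b) {Z : Ω → ℝ → β}
    (hcont : ∀ᵐ ω ∂μ, ContinuousOn (Z ω) (Icc a b))
    (hmeas : ∀ t ∈ Icc a b, AEMeasurable (fun ω => Z ω t) μ) (ν : Measure ℝ) [SFinite ν] :
    AEMeasurable (Function.uncurry Z) (μ.prod (ν.restrict (Icc a b))) := by
  have hproj_cont : Continuous fun t => (projIcc a b hab t : ℝ) :=
    continuous_subtype_val.comp continuous_projIcc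
  obtain ⟨W, hWm, hWZ⟩ := exists_measurable_uncurry_ae_eq_of_continuous
    (Z := fun ω t => Z ω (projIcc a b hab t))
    (hcont.mono fun ω h => h.comp_continuous hproj_cont fun t => (projIcc a b hab t).2)
    (fun t => hmeas _ (projIcc a b hab t).2)
  refine ⟨Function.uncurry W, hWm, ?_⟩
  filter_upwards [Measure.quasiMeasurePreserving_fst.ae hWZ,
    Measure.quasiMeasurePreserving_snd.ae (ae_restrict_mem measurableSet_Icc)] with p hW ht
  show Z p.1 p.2 = W p.1 p.2
  rw [hW]
  simp only [projIcc_of_mem hab ht]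

theorem ProbabilityTheory.IdentDistrib.of_map_eq {Ω β : Type*} [MeasurableSpace Ω]
    [MeasurableSpace β] {μ : Measure Ω} [IsProbabilityMeasure μ] {f g : Ω → β}
    (hg : AEMeasurable g μ) (h : μ.map f = μ.map g) : IdentDistrib f g μ μ :=
  ⟨.of_map_ne_zero (h ▸ (Measure.isProbabilityMeasure_map hg).ne_zero), hg, h⟩

section Affine

variable {Ω E : Type*} [MeasurableSpace Ω] {μ : Measure Ω} [IsProbabilityMeasure μ]
  [NormedAddCommGroup E] [NormedSpace ℝ E] [CompleteSpace E] {φ : E → ℝ} {l : E →L[ℝ] ℝ}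
  {b : ℝ}

theorem integral_comp_eq_integral_sub_affine_add {D : Ω → E} (hD : Integrable D μ)
    (hψD : Integrable (fun ω => φ (D ω) - (l (D ω) + b)) μ) :
    ∫ ω, φ (D ω) ∂μ = ∫ ω, (φ (D ω) - (l (D ω) + b)) ∂μ + (l (∫ ω, D ω ∂μ) + b) := by
  have hl : Integrable (fun ω => l (D ω)) μ := l.integrable_comp hD
  have hlb : Integrable (fun ω => l (D ω) + b) μ := hl.add (integrable_const b)
  calc ∫ ω, φ (D ω) ∂μ = ∫ ω, ((φ (D ω) - (l (D ω) + b)) + (l (D ω) + b)) ∂μ := by simp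
    _ = _ := by
      rw [integral_add hψD hlb, integral_add hl (integrable_const b),
        l.integral_comp_comm hD]
      simp

theorem integral_comp_le_of_lintegral_ofReal_sub_affine_le (hφc : Continuous φ)
    (hlb : ∀ x, l x + b ≤ φ x) {D Y : Ω → E} (hD : Integrable D μ) (hY : Integrable Y μ)
    (hφY : Integrable (fun ω => φ (Y ω)) μ) (hmean : ∫ ω, D ω ∂μ = ∫ ω, Y ω ∂μ)
    (hle : ∫⁻ ω, ENNReal.ofReal (φ (D ω) - (l (D ω) + b)) ∂μ ≤
      ∫⁻ ω, ENNReal.ofReal (φ (Y ω) - (l (Y ω) + b)) ∂μ) :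
    ∫ ω, φ (D ω) ∂μ ≤ ∫ ω, φ (Y ω) ∂μ := by
  have hψ0 : ∀ x, 0 ≤ φ x - (l x + b) := fun x => sub_nonneg.2 (hlb x)
  have hψY : Integrable (fun ω => φ (Y ω) - (l (Y ω) + b)) μ :=
    hφY.sub ((l.integrable_comp hY).add (integrable_const b))
  have hψD_meas : AEStronglyMeasurable (fun ω => φ (D ω) - (l (D ω) + b)) μ :=
    (by fun_prop : Continuous fun x => φ x - (l x + b)).comp_aestronglyMeasurable hD.1
  have hψD : Integrable (fun ω => φ (D ω) - (l (D ω) + b)) μ :=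
    ⟨hψD_meas, (hasFiniteIntegral_iff_ofReal (ae_of_all _ fun ω => hψ0 (D ω))).2
      (hle.trans_lt hψY.lintegral_lt_top)⟩
  have hψ_le : ∫ ω, (φ (D ω) - (l (D ω) + b)) ∂μ ≤ ∫ ω, (φ (Y ω) - (l (Y ω) + b)) ∂μ := by
    rw [integral_eq_lintegral_of_nonneg_ae (ae_of_all _ fun ω => hψ0 (D ω)) hψD_meas,
      integral_eq_lintegral_of_nonneg_ae (ae_of_all _ fun ω => hψ0 (Y ω)) hψY.1]
    exact ENNReal.toReal_mono hψY.lintegral_lt_top.ne hle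
  rw [integral_comp_eq_integral_sub_affine_add hD hψD,
    integral_comp_eq_integral_sub_affine_add hY hψY, hmean]
  linarith

end Affine

namespace RectifiedFlow

variable {Ω E : Type*} [MeasurableSpace Ω] {μ : Measure Ω} [IsProbabilityMeasure μ]
  [NormedAddCommGroup E] [NormedSpace ℝ E] [FiniteDimensional ℝ E] [MeasurableSpace E]
  [BorelSpace E] {X : ℝ → Ω → E} {Y : Ω → E} {v : ℝ → E → E} {Z : Ω → ℝ → E} {φ : E → ℝ}

theorem lintegral_setLIntegral_velocity_le (hX : ∀ t, Measurable (X t)) (hY : Integrable Y μ)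
    (hvm : Measurable (Function.uncurry v))
    (hv : ∀ t ∈ Icc (0 : ℝ) 1,
      (fun ω => v t (X t ω)) =ᵐ[μ] μ[Y | MeasurableSpace.comap (X t) inferInstance])
    (hZm : AEMeasurable (Function.uncurry Z) (μ.prod (volume.restrict (Icc 0 1))))
    (hZlaw : ∀ t ∈ Icc (0 : ℝ) 1, μ.map (fun ω => Z ω t) = μ.map (X t))
    (hφ : ConvexOn ℝ univ φ) (hφc : Continuous φ) (hφ0 : ∀ x, 0 ≤ φ x)
    (hφY : Integrable (fun ω => φ (Y ω)) μ) :
    ∫⁻ ω, (∫⁻ t in Icc (0 : ℝ) 1, ENNReal.ofReal (φ (v t (Z ω t)))) ∂μ ≤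
      ∫⁻ ω, ENNReal.ofReal (φ (Y ω)) ∂μ := by
  have hcost_m : Measurable fun p : ℝ × E => ENNReal.ofReal (φ (v p.1 p.2)) :=
    (hφc.measurable.comp hvm).ennreal_ofReal
  have hslice : ∀ t ∈ Icc (0 : ℝ) 1, ∫⁻ ω, ENNReal.ofReal (φ (v t (Z ω t))) ∂μ ≤
      ∫⁻ ω, ENNReal.ofReal (φ (Y ω)) ∂μ := by
    intro t ht
    have hcost_t : Measurable fun x => ENNReal.ofReal (φ (v t x)) :=
      hcost_m.comp measurable_prodMk_left
    calc ∫⁻ ω, ENNReal.ofReal (φ (v t (Z ω t))) ∂μ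
        = ∫⁻ ω, ENNReal.ofReal (φ (v t (X t ω))) ∂μ :=
          ((IdentDistrib.of_map_eq (hX t).aemeasurable (hZlaw t ht)).comp hcost_t).lintegral_eq
      _ = ∫⁻ ω, ENNReal.ofReal (φ (μ[Y | MeasurableSpace.comap (X t) inferInstance] ω)) ∂μ :=
          lintegral_congr_ae ((hv t ht).mono fun ω h => by simp [h])
      _ ≤ _ := hφ.lintegral_ofReal_map_condExp_le (hX t).comap_le hφ0 hY hφY
  rw [lintegral_lintegral_swap (f := fun ω t => ENNReal.ofReal (φ (v t (Z ω t))))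
    (hcost_m.comp_aemeasurable (measurable_snd.aemeasurable.prodMk hZm))]
  calc ∫⁻ t in Icc 0 1, ∫⁻ ω, ENNReal.ofReal (φ (v t (Z ω t))) ∂μ
      ≤ ∫⁻ t in Icc 0 1, ∫⁻ ω, ENNReal.ofReal (φ (Y ω)) ∂μ :=
        setLIntegral_mono' measurableSet_Icc hslice
    _ = ∫⁻ ω, ENNReal.ofReal (φ (Y ω)) ∂μ := by simp

theorem lintegral_cost_le (hX : ∀ t, Measurable (X t)) (hY : Integrable Y μ)
    (hvm : Measurable (Function.uncurry v))
    (hv : ∀ t ∈ Icc (0 : ℝ) 1,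
      (fun ω => v t (X t ω)) =ᵐ[μ] μ[Y | MeasurableSpace.comap (X t) inferInstance])
    (hZm : AEMeasurable (Function.uncurry Z) (μ.prod (volume.restrict (Icc 0 1))))
    (hZode : ∀ᵐ ω ∂μ, ∀ t ∈ Icc (0 : ℝ) 1,
      HasDerivWithinAt (Z ω) (v t (Z ω t)) (Icc 0 1) t)
    (hZlaw : ∀ t ∈ Icc (0 : ℝ) 1, μ.map (fun ω => Z ω t) = μ.map (X t))
    (hφ : ConvexOn ℝ univ φ) (hφc : Continuous φ) (hφ0 : ∀ x, 0 ≤ φ x)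
    (hφY : Integrable (fun ω => φ (Y ω)) μ) :
    ∫⁻ ω, ENNReal.ofReal (φ (Z ω 1 - Z ω 0)) ∂μ ≤ ∫⁻ ω, ENNReal.ofReal (φ (Y ω)) ∂μ := by
  have hnorm := lintegral_setLIntegral_velocity_le hX hY hvm hv hZm hZlaw
    (convexOn_norm convex_univ) continuous_norm norm_nonneg hY.norm
  have hnorm_m : AEMeasurable (fun ω => ∫⁻ t in Icc (0 : ℝ) 1, ENNReal.ofReal ‖v t (Z ω t)‖) μ :=
    ((hvm.comp_aemeasurable (measurable_snd.aemeasurable.prodMk hZm)).norm.ennreal_ofReal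
      ).lintegral_prod_right'
  have hvZ_int : ∀ᵐ ω ∂μ, IntegrableOn (fun t => v t (Z ω t)) (Icc 0 1) := by
    filter_upwards [ae_lt_top' hnorm_m (hnorm.trans_lt hY.norm.lintegral_lt_top).ne, hZode]
      with ω hfin hode
    have hZω : AEMeasurable (Z ω) (volume.restrict (Icc 0 1)) :=
      ContinuousOn.aemeasurable (fun t ht => (hode t ht).continuousWithinAt) measurableSet_Icc
    exact ⟨(hvm.comp_aemeasurable (aemeasurable_id.prodMk hZω)).aestronglyMeasurable,
      (hasFiniteIntegral_iff_norm _).2 hfin⟩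
  calc ∫⁻ ω, ENNReal.ofReal (φ (Z ω 1 - Z ω 0)) ∂μ
      ≤ ∫⁻ ω, (∫⁻ t in Icc (0 : ℝ) 1, ENNReal.ofReal (φ (v t (Z ω t)))) ∂μ := by
        refine lintegral_mono_ae ?_
        filter_upwards [hZode, hvZ_int] with ω hode hint
        exact hφ.ofReal_map_sub_le_setLIntegral_Icc hφc hφ0 hode hint
    _ ≤ _ := lintegral_setLIntegral_velocity_le hX hY hvm hv hZm hZlaw hφ hφc hφ0 hφY

end RectifiedFlow

theorem rectified_flow_does_not_increase_convex_cost_general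
    {d : ℕ} {Ω : Type*} [inst𝔽 : MeasurableSpace Ω]
    (μ : Measure Ω) [IsProbabilityMeasure μ]
    (X₀ X₁ : Ω → EuclideanSpace ℝ (Fin d))
    (hX₀m : Measurable X₀) (hX₁m : Measurable X₁)
    (hX₀i : Integrable X₀ μ) (hX₁i : Integrable X₁ μ)
    (X : ℝ → Ω → EuclideanSpace ℝ (Fin d))
    (hX : ∀ t, X t = fun ω => (1 - t) • X₀ ω + t • X₁ ω)
    (v : ℝ → EuclideanSpace ℝ (Fin d) → EuclideanSpace ℝ (Fin d))
    (hvmeas : Measurable (Function.uncurry v))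
    (hv : ∀ t ∈ Set.Icc (0 : ℝ) 1,
      (fun ω => v t (X t ω)) =ᵐ[μ]
        μ[fun ω => X₁ ω - X₀ ω | MeasurableSpace.comap (X t) inferInstance])
    (Z : Ω → ℝ → EuclideanSpace ℝ (Fin d))
    (hZode : ∀ᵐ ω ∂μ, ∀ t ∈ Set.Icc (0 : ℝ) 1,
      HasDerivWithinAt (Z ω) (v t (Z ω t)) (Set.Icc 0 1) t)
    (hZlaw : ∀ t ∈ Set.Icc (0 : ℝ) 1,
      Measure.map (fun ω => Z ω t) μ = Measure.map (X t) μ)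
    (c : EuclideanSpace ℝ (Fin d) → ℝ)
    (hc : ConvexOn ℝ Set.univ c)
    (hcXi : Integrable (fun ω => c (X₁ ω - X₀ ω)) μ) :
    ∫ ω, c (Z ω 1 - Z ω 0) ∂μ ≤ ∫ ω, c (X₁ ω - X₀ ω) ∂μ := by
  have hXm : ∀ t, Measurable (X t) := fun t => hX t ▸ by fun_prop
  have hlaw : ∀ t ∈ Icc (0 : ℝ) 1, IdentDistrib (fun ω => Z ω t) (X t) μ μ :=
    fun t ht => .of_map_eq (hXm t).aemeasurable (hZlaw t ht)
  have hZm : AEMeasurable (Function.uncurry Z) (μ.prod (volume.restrict (Icc 0 1))) :=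
    aemeasurable_uncurry_of_continuousOn_Icc zero_le_one
      (hZode.mono fun ω h t ht => (h t ht).continuousWithinAt)
      (fun t ht => (hlaw t ht).aemeasurable_fst) volume
  have hZ₀ : IdentDistrib (fun ω => Z ω 0) X₀ μ μ := by
    simpa [hX] using hlaw 0 (left_mem_Icc.2 zero_le_one)
  have hZ₁ : IdentDistrib (fun ω => Z ω 1) X₁ μ μ := by
    simpa [hX] using hlaw 1 (right_mem_Icc.2 zero_le_one)
  have hZ₀i : Integrable (fun ω => Z ω 0) μ := hZ₀.integrable_iff.2 hX₀i
  have hZ₁i : Integrable (fun ω => Z ω 1) μ := hZ₁.integrable_iff.2 hX₁i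
  have hY : Integrable (fun ω => X₁ ω - X₀ ω) μ := hX₁i.sub hX₀i
  have hmean : ∫ ω, (Z ω 1 - Z ω 0) ∂μ = ∫ ω, (X₁ ω - X₀ ω) ∂μ := by
    rw [integral_sub hZ₁i hZ₀i, integral_sub hX₁i hX₀i, hZ₁.integral_eq, hZ₀.integral_eq]
  have hcont : Continuous c := continuousOn_univ.1 (hc.continuousOn isOpen_univ)
  obtain ⟨l, b, hlb⟩ := hc.exists_continuousLinearMap_add_const_le hcont.lowerSemicontinuous
  refine integral_comp_le_of_lintegral_ofReal_sub_affine_le hcont hlb (hZ₁i.sub hZ₀i) hY hcXi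
    hmean ?_
  exact RectifiedFlow.lintegral_cost_le hXm hY hvmeas hv hZm hZode hZlaw
    (hc.sub ((l.toLinearMap.concaveOn convex_univ).add_const b)) (by fun_prop)
    (fun x => sub_nonneg.2 (hlb x)) (hcXi.sub ((l.integrable_comp hY).add (integrable_const b)))

/-- Rectified flow does not increase convex transport costs. Let `X t = (1-t)•X₀ + t•X₁`
be the linear interpolation of integrable random vectors `X₀, X₁`, let `v` be a measurable
velocity field such that `v t (X t ·)` is a version of the conditional expectation
`E[X₁ - X₀ | σ(X t)]` for every `t ∈ [0,1]`, and let `Z` be a process solving the ODE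
`dZ_t = v(t, Z_t) dt` on `[0,1]` almost surely, whose time-`t` marginal law agrees with
that of `X t` for every `t ∈ [0,1]`. Then for every convex cost `c` (with the stated
integrability), `∫ c (Z 1 - Z 0) dμ ≤ ∫ c (X₁ - X₀) dμ`. -/
theorem rectified_flow_does_not_increase_convex_cost
    {d : ℕ} {Ω : Type*} [inst𝔽 : MeasurableSpace Ω]
    (μ : Measure Ω) [IsProbabilityMeasure μ]
    (X₀ X₁ : Ω → EuclideanSpace ℝ (Fin d))
    (hX₀m : Measurable X₀) (hX₁m : Measurable X₁)
    (hX₀i : Integrable X₀ μ) (hX₁i : Integrable X₁ μ)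
    (X : ℝ → Ω → EuclideanSpace ℝ (Fin d))
    (hX : ∀ t, X t = fun ω => (1 - t) • X₀ ω + t • X₁ ω)
    (v : ℝ → EuclideanSpace ℝ (Fin d) → EuclideanSpace ℝ (Fin d))
    (hvmeas : Measurable (Function.uncurry v))
    (hv : ∀ t ∈ Set.Icc (0 : ℝ) 1,
      (fun ω => v t (X t ω)) =ᵐ[μ]
        μ[fun ω => X₁ ω - X₀ ω | MeasurableSpace.comap (X t) inferInstance])
    (Z : Ω → ℝ → EuclideanSpace ℝ (Fin d))
    (hZode : ∀ᵐ ω ∂μ, ∀ t ∈ Set.Icc (0 : ℝ) 1,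
      HasDerivWithinAt (Z ω) (v t (Z ω t)) (Set.Icc 0 1) t)
    (hZlaw : ∀ t ∈ Set.Icc (0 : ℝ) 1,
      Measure.map (fun ω => Z ω t) μ = Measure.map (X t) μ)
    (c : EuclideanSpace ℝ (Fin d) → ℝ)
    (hc : ConvexOn ℝ Set.univ c)
    (hcXi : Integrable (fun ω => c (X₁ ω - X₀ ω)) μ)
    (hcvi : ∀ t ∈ Set.Icc (0 : ℝ) 1, Integrable (fun ω => c (v t (X t ω))) μ)
    (hcvti : IntegrableOn (fun t => ∫ ω, c (v t (X t ω)) ∂μ) (Set.Icc 0 1) volume) :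
    ∫ ω, c (Z ω 1 - Z ω 0) ∂μ ≤ ∫ ω, c (X₁ ω - X₀ ω) ∂μ :=
  rectified_flow_does_not_increase_convex_cost_general (inst𝔽 := inst𝔽) μ X₀ X₁ hX₀m hX₁m hX₀i hX₁i
    X hX v hvmeas hv Z hZode hZlaw c hc hcXi
end

section
/- Let (Ω, 𝔽, μ) be a probability space, let X₀, X₁ : Ω → ℝ^d be integrable random vectors, and for t ∈ [0,1] let X_t := (1−t)·X₀ + t·X₁. Let v : [0,1] × ℝ^d → ℝ^d be measurable such that for every t ∈ [0,1], ω ↦ v(t, X_t(ω)) is a version of the conditional expectation E[X₁ − X₀ | σ(X_t)]. Then for every continuously differentiable function φ : ℝ^d → ℝ that is bounded with bounded gradient, the function t ↦ ∫ φ(X_t(ω)) dμ(ω) is differentiable on (0,1) and its derivative at t equals ∫ ⟨∇φ(X_t(ω)), v(t, X_t(ω))⟩ dμ(ω). In other words, the marginal laws of the interpolation process X_t solve the continuity equation weakly with the rectified-flow velocity field v. -/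
/-!
Along each sample path, `s ↦ X s ω = X₀ ω + s • (X₁ ω - X₀ ω)` is a line, so by the chain rule
`d/ds φ (X s ω) = ⟪∇φ (X s ω), X₁ ω - X₀ ω⟫`; this is dominated by `C ‖X₁ ω - X₀ ω‖`, which is
integrable, so one may differentiate under the integral sign. Since `∇φ (X t)` is bounded and
`σ(X t)`-measurable, the pull-out and tower properties of conditional expectation let us replace
`X₁ - X₀` by `E[X₁ - X₀ | σ(X t)] = v t (X t)` in the resulting integral.
-/

open MeasureTheory

section

variable {Ω E : Type*} {mΩ : MeasurableSpace Ω} {μ : Measure Ω}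
  [NormedAddCommGroup E] [NormedSpace ℝ E]

theorem hasDerivAt_integral_comp_add_smul {φ : E → ℝ} (hφ : ContDiff ℝ 1 φ) {C : ℝ}
    (hφ' : ∀ x, ‖fderiv ℝ φ x‖ ≤ C) {A Y : Ω → E} (hA : AEStronglyMeasurable A μ)
    (hY : Integrable Y μ) (t : ℝ) (hφA : Integrable (fun ω => φ (A ω + t • Y ω)) μ) :
    HasDerivAt (fun s => ∫ ω, φ (A ω + s • Y ω) ∂μ)
      (∫ ω, fderiv ℝ φ (A ω + t • Y ω) (Y ω) ∂μ) t := by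
  have hline : ∀ s : ℝ, AEStronglyMeasurable (fun ω => A ω + s • Y ω) μ := fun s =>
    hA.add (hY.aestronglyMeasurable.fun_const_smul s)
  have hderiv : ∀ ω s, HasDerivAt (fun s => φ (A ω + s • Y ω))
      (fderiv ℝ φ (A ω + s • Y ω) (Y ω)) s := fun ω s =>
    (hφ.differentiable one_ne_zero _).hasFDerivAt.comp_hasDerivAt s
      (((hasDerivAt_id s).smul_const (Y ω)).const_add (A ω) |>.congr_deriv (one_smul ℝ _))
  refine (hasDerivAt_integral_of_dominated_loc_of_deriv_le Filter.univ_mem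
    (.of_forall fun s => hφ.continuous.comp_aestronglyMeasurable (hline s)) hφA
    ((((hφ.continuous_fderiv one_ne_zero).comp continuous_fst).clm_apply
      continuous_snd).comp_aestronglyMeasurable ((hline t).prodMk hY.aestronglyMeasurable))
    (.of_forall fun ω s _ => ?_) (hY.norm.const_mul C)
    (.of_forall fun ω s _ => hderiv ω s)).2
  exact (ContinuousLinearMap.le_opNorm _ _).trans
    (mul_le_mul_of_nonneg_right (hφ' _) (norm_nonneg _))

end

section

variable {Ω E : Type*} {m mΩ : MeasurableSpace Ω} {μ : Measure Ω} [IsFiniteMeasure μ]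
  [NormedAddCommGroup E] [InnerProductSpace ℝ E] [CompleteSpace E]

theorem integral_inner_condExp_of_bound (hm : m ≤ mΩ) {f g : Ω → E}
    (hf : StronglyMeasurable[m] f) {C : ℝ} (hfC : ∀ᵐ ω ∂μ, ‖f ω‖ ≤ C) (hg : Integrable g μ) :
    ∫ ω, inner ℝ (f ω) (μ[g | m] ω) ∂μ = ∫ ω, inner ℝ (f ω) (g ω) ∂μ :=
  calc ∫ ω, inner ℝ (f ω) (μ[g | m] ω) ∂μ
      = ∫ ω, (μ[fun ω => inner ℝ (f ω) (g ω) | m]) ω ∂μ :=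
        integral_congr_ae (condExp_stronglyMeasurable_bilin_of_bound (innerSL ℝ) hm hf hg C
          hfC).symm
    _ = ∫ ω, inner ℝ (f ω) (g ω) ∂μ := integral_condExp hm

end

section

variable {F : Type*} [NormedAddCommGroup F] [InnerProductSpace ℝ F] [CompleteSpace F]

theorem norm_gradient_eq_norm_fderiv (φ : F → ℝ) (x : F) : ‖gradient φ x‖ = ‖fderiv ℝ φ x‖ :=
  (InnerProductSpace.toDual ℝ F).symm.norm_map _

theorem ContDiff.continuous_gradient {φ : F → ℝ} (hφ : ContDiff ℝ 1 φ) :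
    Continuous (gradient φ) :=
  (InnerProductSpace.toDual ℝ F).symm.continuous.comp (hφ.continuous_fderiv one_ne_zero)

end

theorem interpolation_marginals_solve_continuity_equation_general
    {d : ℕ} {Ω : Type*} [inst𝔽 : MeasurableSpace Ω]
    (μ : Measure Ω) [IsProbabilityMeasure μ]
    (X₀ X₁ : Ω → EuclideanSpace ℝ (Fin d))
    (hX₀m : Measurable X₀) (hX₁m : Measurable X₁)
    (hX₀i : Integrable X₀ μ) (hX₁i : Integrable X₁ μ)
    (X : ℝ → Ω → EuclideanSpace ℝ (Fin d))
    (hX : ∀ t, X t = fun ω => (1 - t) • X₀ ω + t • X₁ ω)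
    (v : ℝ → EuclideanSpace ℝ (Fin d) → EuclideanSpace ℝ (Fin d))
    (hv : ∀ t ∈ Set.Icc (0 : ℝ) 1,
      (fun ω => v t (X t ω)) =ᵐ[μ]
        μ[fun ω => X₁ ω - X₀ ω | MeasurableSpace.comap (X t) inferInstance])
    (φ : EuclideanSpace ℝ (Fin d) → ℝ)
    (hφ : ContDiff ℝ 1 φ)
    (hφbdd : ∃ C : ℝ, ∀ x, |φ x| ≤ C)
    (hgradbdd : ∃ C : ℝ, ∀ x, ‖gradient φ x‖ ≤ C) :
    ∀ t ∈ Set.Ioo (0 : ℝ) 1,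
      HasDerivAt (fun s => ∫ ω, φ (X s ω) ∂μ)
        (∫ ω, @inner ℝ _ _ (gradient φ (X t ω)) (v t (X t ω)) ∂μ) t := by
  intro t ht
  obtain ⟨Cφ, hCφ⟩ := hφbdd
  obtain ⟨C, hC⟩ := hgradbdd
  have hX_line : ∀ s, X s = fun ω => X₀ ω + s • (X₁ ω - X₀ ω) := fun s => by
    rw [hX]; ext1 ω; rw [smul_sub, sub_smul, one_smul]; abel
  have hXt_meas : Measurable (X t) := by rw [hX]; fun_prop
  have hφXt_int : Integrable (fun ω => φ (X t ω)) μ :=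
    (integrable_const Cφ).mono' (hφ.continuous.comp_aestronglyMeasurable
      hXt_meas.aestronglyMeasurable) (.of_forall fun ω => hCφ _)
  have hvelocity : ∫ ω, inner ℝ (gradient φ (X t ω)) (v t (X t ω)) ∂μ
      = ∫ ω, inner ℝ (gradient φ (X t ω)) (X₁ ω - X₀ ω) ∂μ := by
    refine (integral_congr_ae ?_).trans (integral_inner_condExp_of_bound hXt_meas.comap_le
      (hφ.continuous_gradient.comp_stronglyMeasurable (comap_measurable (X t)).stronglyMeasurable)
      (.of_forall fun ω => hC _) (hX₁i.sub hX₀i))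
    filter_upwards [hv t (Set.Ioo_subset_Icc_self ht)] with ω hω
    rw [hω]
  rw [hvelocity]
  simp only [hX_line, inner_gradient_left] at hφXt_int ⊢
  exact hasDerivAt_integral_comp_add_smul hφ (fun x => norm_gradient_eq_norm_fderiv φ x ▸ hC x)
    hX₀i.aestronglyMeasurable (hX₁i.sub hX₀i) t hφXt_int

/-- The marginal laws of the linear interpolation `X t = (1-t)•X₀ + t•X₁` solve the
continuity equation weakly with the rectified-flow velocity field `v`, where
`v t (X t ·)` is a version of `E[X₁ - X₀ | σ(X t)]`: for every `C¹` test function `φ`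
that is bounded with bounded gradient and every `t ∈ (0,1)`, the map
`s ↦ ∫ φ (X s ω) dμ(ω)` is differentiable at `t` with derivative
`∫ ⟨∇φ (X t ω), v t (X t ω)⟩ dμ(ω)`. -/
theorem interpolation_marginals_solve_continuity_equation
    {d : ℕ} {Ω : Type*} [inst𝔽 : MeasurableSpace Ω]
    (μ : Measure Ω) [IsProbabilityMeasure μ]
    (X₀ X₁ : Ω → EuclideanSpace ℝ (Fin d))
    (hX₀m : Measurable X₀) (hX₁m : Measurable X₁)
    (hX₀i : Integrable X₀ μ) (hX₁i : Integrable X₁ μ)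
    (X : ℝ → Ω → EuclideanSpace ℝ (Fin d))
    (hX : ∀ t, X t = fun ω => (1 - t) • X₀ ω + t • X₁ ω)
    (v : ℝ → EuclideanSpace ℝ (Fin d) → EuclideanSpace ℝ (Fin d))
    (hvmeas : Measurable (Function.uncurry v))
    (hv : ∀ t ∈ Set.Icc (0 : ℝ) 1,
      (fun ω => v t (X t ω)) =ᵐ[μ]
        μ[fun ω => X₁ ω - X₀ ω | MeasurableSpace.comap (X t) inferInstance])
    (φ : EuclideanSpace ℝ (Fin d) → ℝ)
    (hφ : ContDiff ℝ 1 φ)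
    (hφbdd : ∃ C : ℝ, ∀ x, |φ x| ≤ C)
    (hgradbdd : ∃ C : ℝ, ∀ x, ‖gradient φ x‖ ≤ C) :
    ∀ t ∈ Set.Ioo (0 : ℝ) 1,
      HasDerivAt (fun s => ∫ ω, φ (X s ω) ∂μ)
        (∫ ω, @inner ℝ _ _ (gradient φ (X t ω)) (v t (X t ω)) ∂μ) t :=
  interpolation_marginals_solve_continuity_equation_general (inst𝔽 := inst𝔽) μ X₀ X₁ hX₀m hX₁m hX₀i
    hX₁i X hX v hv φ hφ hφbdd hgradbdd
end
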